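/- Let R = ℂ[x_1,…,x_n] and let I_1, I_2 ⊆ R be homogeneous ideals. Then for every k ∈ ℕ the truncated dual spaces satisfy D_0^k[I_1 ∩ I_2] = D_0^k[I_1] + D_0^k[I_2]. -/

import Mathlib

open MvPolynomial

noncomputable section

/-- Apolarity pairing `⟨q, f⟩ = ∑ α (coeff α q) * (coeff α f)`. -/
def apair {n : ℕ} (q f : MvPolynomial (Fin n) ℂ) : ℂ :=
  ∑ α ∈ q.support, q.coeff α * f.coeff α

lemma apair_eq_sum {n : ℕ} {q : MvPolynomial (Fin n) ℂ} {s : Finset (Fin n →₀ ℕ)}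
    (h : q.support ⊆ s) (f : MvPolynomial (Fin n) ℂ) :
    apair q f = ∑ α ∈ s, q.coeff α * f.coeff α :=
  Finset.sum_subset h (fun α _ hα => by
    rw [MvPolynomial.notMem_support_iff.mp hα, zero_mul])

/-- The Macaulay dual space `D_0[I]` of an ideal at the origin. -/
def dualSpace {n : ℕ} (I : Ideal (MvPolynomial (Fin n) ℂ)) :
    Submodule ℂ (MvPolynomial (Fin n) ℂ) where
  carrier := {q | ∀ f ∈ I, apair q f = 0}
  zero_mem' := by intro f hf; simp [apair]
  add_mem' := by
    intro a b ha hb f hf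
    have h : apair (a + b) f = apair a f + apair b f := by
      rw [apair_eq_sum (s := a.support ∪ b.support) MvPolynomial.support_add,
        apair_eq_sum (s := a.support ∪ b.support) Finset.subset_union_left,
        apair_eq_sum (s := a.support ∪ b.support) Finset.subset_union_right,
        ← Finset.sum_add_distrib]
      exact Finset.sum_congr rfl fun α _ => by rw [coeff_add, add_mul]
    rw [h, ha f hf, hb f hf, add_zero]
  smul_mem' := by
    intro c q hq f hf
    have h : apair (c • q) f = c * apair q f := by
      rw [apair_eq_sum (s := q.support) MvPolynomial.support_smul, apair, Finset.mul_sum]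
      exact Finset.sum_congr rfl fun α _ => by rw [coeff_smul, smul_eq_mul, mul_assoc]
    rw [h, hq f hf, mul_zero]

open scoped Classical in
/-- The contraction `g ∘ q`, realizing the action of `g` on differential functionals:
`coeff α (contract g q) = ∑ β, coeff β g * coeff (α + β) q`. -/
def contract {n : ℕ} (g q : MvPolynomial (Fin n) ℂ) : MvPolynomial (Fin n) ℂ :=
  ∑ β ∈ g.support, ∑ α ∈ q.support,
    if β ≤ α then monomial (α - β) (g.coeff β * q.coeff α) else 0

/-- The truncated dual space `D_0^k[I]`. -/
def truncDual {n : ℕ} (k : ℕ) (I : Ideal (MvPolynomial (Fin n) ℂ)) :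
    Submodule ℂ (MvPolynomial (Fin n) ℂ) where
  carrier := {q | q ∈ dualSpace I ∧ q.totalDegree ≤ k}
  zero_mem' := ⟨(dualSpace I).zero_mem, by simp⟩
  add_mem' := fun ha hb => ⟨(dualSpace I).add_mem ha.1 hb.1,
    le_trans (MvPolynomial.totalDegree_add _ _) (max_le ha.2 hb.2)⟩
  smul_mem' := fun c q hq => ⟨(dualSpace I).smul_mem c hq.1,
    le_trans (MvPolynomial.totalDegree_smul_le c q) hq.2⟩

/-! For `k` fixed, the apolarity pairing is a perfect pairing on the finite-dimensional space
`R_{≤k}` of polynomials of total degree at most `k` (monomials are dual to themselves). If `I` is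
homogeneous and `totalDegree q ≤ k`, then `⟨q, f⟩` only sees the components of `f` of degree at
most `k`, whose sum again lies in `I`; hence `D_0^k[I]` is the orthogonal of `I ∩ R_{≤k}` inside
`R_{≤k}`. In finite dimension the annihilator of an intersection is the sum of the annihilators. -/

section Apolarity

variable {n : ℕ}

lemma apair_add_left (a b f : MvPolynomial (Fin n) ℂ) :
    apair (a + b) f = apair a f + apair b f := by
  rw [apair_eq_sum (s := a.support ∪ b.support) support_add,
    apair_eq_sum (s := a.support ∪ b.support) Finset.subset_union_left,
    apair_eq_sum (s := a.support ∪ b.support) Finset.subset_union_right,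
    ← Finset.sum_add_distrib]
  exact Finset.sum_congr rfl fun α _ => by rw [coeff_add, add_mul]

lemma apair_smul_left (c : ℂ) (q f : MvPolynomial (Fin n) ℂ) :
    apair (c • q) f = c * apair q f := by
  rw [apair_eq_sum support_smul, apair, Finset.mul_sum]
  exact Finset.sum_congr rfl fun α _ => by rw [coeff_smul, smul_eq_mul, mul_assoc]

lemma apair_add_right (q f g : MvPolynomial (Fin n) ℂ) :
    apair q (f + g) = apair q f + apair q g := by
  simp only [apair, coeff_add, mul_add, Finset.sum_add_distrib]

lemma apair_smul_right (c : ℂ) (q f : MvPolynomial (Fin n) ℂ) :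
    apair q (c • f) = c * apair q f := by
  simp only [apair, coeff_smul, smul_eq_mul, Finset.mul_sum, mul_left_comm]

lemma apair_monomial_one (q : MvPolynomial (Fin n) ℂ) (α : Fin n →₀ ℕ) :
    apair q (monomial α 1) = q.coeff α := by
  classical
  rw [apair_eq_sum (Finset.subset_union_left (s₂ := {α})), Finset.sum_eq_single_of_mem α
    (Finset.mem_union_right _ (Finset.mem_singleton_self α))]
  · rw [coeff_monomial, if_pos rfl, mul_one]
  · intro β _ hβ
    rw [coeff_monomial, if_neg (Ne.symm hβ), mul_zero]

lemma apair_sum_homogeneousComponent {k : ℕ} {q : MvPolynomial (Fin n) ℂ}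
    (hq : q.totalDegree ≤ k) (f : MvPolynomial (Fin n) ℂ) :
    apair q (∑ d ∈ Finset.range (k + 1), homogeneousComponent d f) = apair q f := by
  refine Finset.sum_congr rfl fun α hα => ?_
  have hα_deg : α.degree ∈ Finset.range (k + 1) :=
    Finset.mem_range_succ_iff.mpr ((le_totalDegree hα).trans hq)
  simp only [coeff_sum, coeff_homogeneousComponent, Finset.sum_ite_eq, if_pos hα_deg]

lemma mem_truncDual_iff_of_homogeneous {k : ℕ} {I : Ideal (MvPolynomial (Fin n) ℂ)}
    (hI : ∀ f ∈ I, ∀ d : ℕ, homogeneousComponent d f ∈ I) {q : MvPolynomial (Fin n) ℂ} :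
    q ∈ truncDual k I ↔ q.totalDegree ≤ k ∧ ∀ f ∈ I, f.totalDegree ≤ k → apair q f = 0 := by
  refine ⟨fun hq => ⟨hq.2, fun f hf _ => hq.1 f hf⟩, fun ⟨hq, hqI⟩ => ⟨fun f hf => ?_, hq⟩⟩
  rw [← apair_sum_homogeneousComponent hq f]
  refine hqI _ (Ideal.sum_mem _ fun d _ => hI f hf d) (totalDegree_finsetSum_le fun d hd => ?_)
  exact (homogeneousComponent_isHomogeneous d f).totalDegree_le.trans
    (Finset.mem_range_succ_iff.mp hd)

end Apolarity

def apairDual (n k : ℕ) :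
    restrictTotalDegree (Fin n) ℂ k →ₗ[ℂ] Module.Dual ℂ (restrictTotalDegree (Fin n) ℂ k) :=
  LinearMap.mk₂ ℂ (fun q f => apair q.1 f.1) (fun _ _ _ => apair_add_left _ _ _)
    (fun _ _ _ => apair_smul_left _ _ _) (fun _ _ _ => apair_add_right _ _ _)
    (fun _ _ _ => apair_smul_right _ _ _)

lemma apairDual_apply {n k : ℕ} (q f : restrictTotalDegree (Fin n) ℂ k) :
    apairDual n k q f = apair q.1 f.1 :=
  rfl

lemma apairDual_injective (n k : ℕ) : Function.Injective (apairDual n k) := by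
  refine (injective_iff_map_eq_zero _).mpr fun q hq =>
    Subtype.ext <| MvPolynomial.ext _ _ fun α => ?_
  rw [ZeroMemClass.coe_zero, coeff_zero]
  by_contra hα
  have hα_mem : monomial α (1 : ℂ) ∈ restrictTotalDegree (Fin n) ℂ k :=
    (mem_restrictTotalDegree _ _ _).mpr <| (totalDegree_monomial_le α 1).trans <|
      (le_totalDegree (mem_support_iff.mpr hα)).trans ((mem_restrictTotalDegree _ _ _).mp q.2)
  apply hα
  rw [← apair_monomial_one, ← apairDual_apply q ⟨_, hα_mem⟩, hq, LinearMap.zero_apply]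

def apairDualEquiv (n k : ℕ) :
    restrictTotalDegree (Fin n) ℂ k ≃ₗ[ℂ] Module.Dual ℂ (restrictTotalDegree (Fin n) ℂ k) :=
  (apairDual n k).linearEquivOfInjective (apairDual_injective n k) Subspace.dual_finrank_eq.symm

def truncIdeal {n : ℕ} (k : ℕ) (I : Ideal (MvPolynomial (Fin n) ℂ)) :
    Submodule ℂ (restrictTotalDegree (Fin n) ℂ k) :=
  (I.restrictScalars ℂ).comap (restrictTotalDegree (Fin n) ℂ k).subtype

lemma truncIdeal_inf {n : ℕ} (k : ℕ) (I J : Ideal (MvPolynomial (Fin n) ℂ)) :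
    truncIdeal k (I ⊓ J) = truncIdeal k I ⊓ truncIdeal k J := by
  rw [truncIdeal, Submodule.restrictScalars_inf, Submodule.comap_inf]
  rfl

lemma truncDual_eq_map_dualAnnihilator {n k : ℕ} {I : Ideal (MvPolynomial (Fin n) ℂ)}
    (hI : ∀ f ∈ I, ∀ d : ℕ, homogeneousComponent d f ∈ I) :
    truncDual k I = ((truncIdeal k I).dualAnnihilator.map
      (apairDualEquiv n k).symm.toLinearMap).map (restrictTotalDegree (Fin n) ℂ k).subtype := by
  ext q
  rw [← Submodule.comap_equiv_eq_map_symm, Submodule.mem_map,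
    mem_truncDual_iff_of_homogeneous hI]
  constructor
  · rintro ⟨hq, hqI⟩
    refine ⟨⟨q, (mem_restrictTotalDegree _ _ _).mpr hq⟩, ?_, rfl⟩
    exact (Submodule.mem_dualAnnihilator _).mpr fun f hf =>
      hqI f.1 hf ((mem_restrictTotalDegree _ _ _).mp f.2)
  · rintro ⟨q, hq, rfl⟩
    refine ⟨(mem_restrictTotalDegree _ _ _).mp q.2, fun f hf hf_deg => ?_⟩
    exact (Submodule.mem_dualAnnihilator _).mp hq
      ⟨f, (mem_restrictTotalDegree _ _ _).mpr hf_deg⟩ hf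

/-- For homogeneous ideals `I₁, I₂`, the truncated dual spaces satisfy
`D_0^k[I₁ ∩ I₂] = D_0^k[I₁] + D_0^k[I₂]` for every `k`. -/
theorem truncDual_inf_of_homogeneous (n : ℕ) (I₁ I₂ : Ideal (MvPolynomial (Fin n) ℂ))
    (h₁ : ∀ f ∈ I₁, ∀ d : ℕ, homogeneousComponent d f ∈ I₁)
    (h₂ : ∀ f ∈ I₂, ∀ d : ℕ, homogeneousComponent d f ∈ I₂)
    (k : ℕ) :
    truncDual k (I₁ ⊓ I₂) = truncDual k I₁ + truncDual k I₂ := by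
  have h₁₂ : ∀ f ∈ I₁ ⊓ I₂, ∀ d : ℕ, homogeneousComponent d f ∈ I₁ ⊓ I₂ :=
    fun f hf d => ⟨h₁ f hf.1 d, h₂ f hf.2 d⟩
  rw [truncDual_eq_map_dualAnnihilator h₁₂, truncDual_eq_map_dualAnnihilator h₁,
    truncDual_eq_map_dualAnnihilator h₂, truncIdeal_inf, Subspace.dualAnnihilator_inf_eq,
    Submodule.map_sup, Submodule.map_sup, Submodule.add_eq_sup]
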